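/- arXiv:2208.09025 — 3 statements merged into one kernel-verified Lean document; each statement's English description precedes it below -/
import Mathlib

section
/- Let π be a juggling function of period n, let C be a π-prefrieze over a field 𝕜 with dual C†, and let I and J be subsets of equal cardinality of an interval [a,b] ⊂ ℤ with b − a < n. Then det(C†_{I,J}) = det(C_{[a,b]∖J, [a,b]∖I}). -/
open Finset

variable {K : Type*} [Field K]

/-- A juggling function of period `n`: a bijection `π : ℤ → ℤ` with
`i ≤ π i ≤ i + n` and `π (i + n) = π i + n` for all `i`. -/
structure IsJuggling (n : ℕ) (π : ℤ ≃ ℤ) : Prop where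
  npos : 0 < n
  le_self : ∀ i : ℤ, i ≤ π i
  le_add : ∀ i : ℤ, π i ≤ i + n
  periodic : ∀ i : ℤ, π (i + n) = π i + n

/-- The juggling function `π` of period `n` has `h` balls. -/
def HasBalls (n : ℕ) (π : ℤ ≃ ℤ) (h : ℕ) : Prop :=
  ∑ i ∈ Finset.Icc (1 : ℤ) (n : ℤ), (π i - i) = (h : ℤ) * n

/-- The dual juggling function `π†`, `a ↦ π⁻¹ a + n`. -/
def dualJug (n : ℕ) (π : ℤ ≃ ℤ) : ℤ ≃ ℤ :=
  π.symm.trans (Equiv.addRight (n : ℤ))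

/-- A `π`-prefrieze: `C a b = 1` if `a = b`; `C a b = (-1)^|S_π(b,a)|` if `a = π b`;
and `C a b = 0` whenever `a ∉ [b, π b]` or `b ∉ [π⁻¹ a, a]`. -/
def IsPrefrieze (π : ℤ ≃ ℤ) (C : ℤ → ℤ → K) : Prop :=
  ∀ a b : ℤ,
    (a = b → C a b = 1) ∧
    (a = π b → C a b = (-1 : K) ^ Set.ncard {i : ℤ | b < i ∧ π i < a}) ∧
    (¬(b ≤ a ∧ a ≤ π b) ∨ ¬(π.symm a ≤ b ∧ b ≤ a) → C a b = 0)

/-- The determinant of the square submatrix of the `ℤ×ℤ` matrix `C` with rows indexed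
by `I` and columns by `J`, each taken in increasing order (junk value `0` if the
cardinalities differ). -/
noncomputable def minor (C : ℤ → ℤ → K) (I J : Finset ℤ) : K :=
  if h : J.card = I.card then
    Matrix.det (Matrix.of fun i j : Fin I.card =>
      C (I.orderEmbOfFin rfl i) (J.orderEmbOfFin h j))
  else 0

/-- The dual `C†` of a `π`-prefrieze `C` (for `π` of period `n` with `h` balls). -/
noncomputable def dualMat (n h : ℕ) (π : ℤ ≃ ℤ) (C : ℤ → ℤ → K) : ℤ → ℤ → K :=
  fun a b =>
    if b ≤ a ∧ a < b + n then minor C (Finset.Icc (b + 1) a) (Finset.Icc b (a - 1))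
    else if π b = b ∧ a = b + n then (-1 : K) ^ ((h : ℤ) - 1)
    else 0

noncomputable def minorF {m : ℕ} (A : Matrix (Fin m) (Fin m) K) (S T : Finset (Fin m)) : K :=
  if h : T.card = S.card then
    Matrix.det (Matrix.of fun p q : Fin S.card =>
      A (S.orderEmbOfFin rfl p) (T.orderEmbOfFin h q))
  else 0

lemma minorF_eq_det {m k : ℕ} (A : Matrix (Fin m) (Fin m) K) (S T : Finset (Fin m))
    (hS : S.card = k) (hT : T.card = k) :
    minorF A S T = Matrix.det (Matrix.of fun p q : Fin k =>
      A (S.orderEmbOfFin hS p) (T.orderEmbOfFin hT q)) := by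
  subst hS
  rw [minorF, dif_pos hT]

lemma key_expansion : ∀ (k m : ℕ) (A : Matrix (Fin m) (Fin m) K) (I J : Finset (Fin m))
    (hI : I.card = k) (hJ : J.card = k)
    (_ : ∀ t : Fin k, ∀ r : Fin m,
      A r (I.orderEmbOfFin hI t) = if r = J.orderEmbOfFin hJ t then 1 else 0),
    A.det = (-1 : K) ^ ((∑ x ∈ I, (x : ℕ)) + ∑ y ∈ J, (y : ℕ)) * minorF A Jᶜ Iᶜ := by
  intro k
  induction k with
  | zero =>
    intro m A I J hI hJ _
    have hIe : I = ∅ := card_eq_zero.mp hI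
    have hJe : J = ∅ := card_eq_zero.mp hJ
    subst hIe; subst hJe
    have hc : (∅ᶜ : Finset (Fin m)).card = m := by simp
    rw [minorF_eq_det A _ _ hc hc]
    have he : ∀ p : Fin m, (∅ᶜ : Finset (Fin m)).orderEmbOfFin hc p = p := by
      intro p
      exact (congrFun (orderEmbOfFin_unique hc (f := fun p : Fin m => p)
        (fun x => by simp) strictMono_id) p).symm
    simp only [he, sum_empty, Nat.add_zero, pow_zero, one_mul]
    rfl
  | succ k ih =>
    intro m A I J hI hJ hcol
    rcases m with _ | m'
    · have : I = ∅ := Subsingleton.elim _ _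
      rw [this] at hI
      simp at hI
    set i₀ := I.orderEmbOfFin hI (Fin.last k) with hi₀def
    set j₀ := J.orderEmbOfFin hJ (Fin.last k) with hj₀def
    have hi₀I : i₀ ∈ I := I.orderEmbOfFin_mem hI _
    have hj₀J : j₀ ∈ J := J.orderEmbOfFin_mem hJ _
    -- collapse det along column i₀
    have hdet1 : A.det = (-1 : K) ^ ((j₀ : ℕ) + (i₀ : ℕ)) *
        (A.submatrix j₀.succAbove i₀.succAbove).det := by
      rw [Matrix.det_succ_column A i₀, Finset.sum_eq_single j₀]
      · rw [hcol (Fin.last k) j₀, if_pos rfl, mul_one]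
      · intro r _ hr
        rw [hcol (Fin.last k) r, if_neg hr, mul_zero, zero_mul]
      · intro hj; exact absurd (mem_univ j₀) hj
    -- reduced index sets
    set I' : Finset (Fin m') := univ.filter (fun t => i₀.succAbove t ∈ I) with hI'def
    set J' : Finset (Fin m') := univ.filter (fun t => j₀.succAbove t ∈ J) with hJ'def
    have himI : I'.image i₀.succAbove = I.erase i₀ := by
      ext x
      simp only [mem_image, hI'def, mem_filter, mem_univ, true_and, mem_erase]
      constructor
      · rintro ⟨t, ht, rfl⟩; exact ⟨Fin.succAbove_ne _ _, ht⟩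
      · rintro ⟨hne, hx⟩
        obtain ⟨t, rfl⟩ := Fin.exists_succAbove_eq hne
        exact ⟨t, hx, rfl⟩
    have himJ : J'.image j₀.succAbove = J.erase j₀ := by
      ext x
      simp only [mem_image, hJ'def, mem_filter, mem_univ, true_and, mem_erase]
      constructor
      · rintro ⟨t, ht, rfl⟩; exact ⟨Fin.succAbove_ne _ _, ht⟩
      · rintro ⟨hne, hx⟩
        obtain ⟨t, rfl⟩ := Fin.exists_succAbove_eq hne
        exact ⟨t, hx, rfl⟩
    have hEcI : (I.erase i₀).card = k := by rw [card_erase_of_mem hi₀I, hI]; rfl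
    have hEcJ : (J.erase j₀).card = k := by rw [card_erase_of_mem hj₀J, hJ]; rfl
    have hI'c : I'.card = k := by
      rw [← hEcI, ← himI, card_image_of_injective _ Fin.succAbove_right_injective]
    have hJ'c : J'.card = k := by
      rw [← hEcJ, ← himJ, card_image_of_injective _ Fin.succAbove_right_injective]
    -- enumeration compatibility for the first k elements
    have e1a : ∀ t : Fin k, I.orderEmbOfFin hI t.castSucc = (I.erase i₀).orderEmbOfFin hEcI t := by
      intro t
      refine congrFun (orderEmbOfFin_unique hEcI (fun s => mem_erase.mpr ⟨?_, I.orderEmbOfFin_mem hI _⟩)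
        (fun s t hst => (I.orderEmbOfFin hI).strictMono (Fin.castSucc_lt_castSucc_iff.mpr hst))) t
      intro hcontra
      rw [hi₀def] at hcontra
      have h5 := orderEmbOfFin_eq_orderEmbOfFin_iff.mp hcontra
      have h6 := s.isLt
      simp at h5
      omega
    have e1b : ∀ t : Fin k, i₀.succAbove (I'.orderEmbOfFin hI'c t) = (I.erase i₀).orderEmbOfFin hEcI t := by
      intro t
      refine congrFun (orderEmbOfFin_unique hEcI
        (fun s => mem_erase.mpr ⟨Fin.succAbove_ne _ _, ?_⟩)
        (fun s t hst => Fin.strictMono_succAbove i₀ ((I'.orderEmbOfFin hI'c).strictMono hst))) t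
      exact (mem_filter.mp (I'.orderEmbOfFin_mem hI'c s)).2
    have E1 : ∀ t : Fin k, i₀.succAbove (I'.orderEmbOfFin hI'c t) = I.orderEmbOfFin hI t.castSucc := by
      intro t; rw [e1b t, e1a t]
    have e2a : ∀ t : Fin k, J.orderEmbOfFin hJ t.castSucc = (J.erase j₀).orderEmbOfFin hEcJ t := by
      intro t
      refine congrFun (orderEmbOfFin_unique hEcJ (fun s => mem_erase.mpr ⟨?_, J.orderEmbOfFin_mem hJ _⟩)
        (fun s t hst => (J.orderEmbOfFin hJ).strictMono (Fin.castSucc_lt_castSucc_iff.mpr hst))) t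
      intro hcontra
      rw [hj₀def] at hcontra
      have h5 := orderEmbOfFin_eq_orderEmbOfFin_iff.mp hcontra
      have h6 := s.isLt
      simp at h5
      omega
    have e2b : ∀ t : Fin k, j₀.succAbove (J'.orderEmbOfFin hJ'c t) = (J.erase j₀).orderEmbOfFin hEcJ t := by
      intro t
      refine congrFun (orderEmbOfFin_unique hEcJ
        (fun s => mem_erase.mpr ⟨Fin.succAbove_ne _ _, ?_⟩)
        (fun s t hst => Fin.strictMono_succAbove j₀ ((J'.orderEmbOfFin hJ'c).strictMono hst))) t
      exact (mem_filter.mp (J'.orderEmbOfFin_mem hJ'c s)).2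
    have E2 : ∀ t : Fin k, j₀.succAbove (J'.orderEmbOfFin hJ'c t) = J.orderEmbOfFin hJ t.castSucc := by
      intro t; rw [e2b t, e2a t]
    -- max facts
    have hmaxI : ∀ x ∈ I, x ≤ i₀ := by
      intro x hx
      have : (x : Fin (m'+1)) ∈ Set.range (I.orderEmbOfFin hI) := by
        rw [range_orderEmbOfFin]; exact hx
      obtain ⟨s, rfl⟩ := this
      exact (I.orderEmbOfFin hI).monotone (Fin.le_last s)
    have hmaxJ : ∀ x ∈ J, x ≤ j₀ := by
      intro x hx
      have : (x : Fin (m'+1)) ∈ Set.range (J.orderEmbOfFin hJ) := by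
        rw [range_orderEmbOfFin]; exact hx
      obtain ⟨s, rfl⟩ := this
      exact (J.orderEmbOfFin hJ).monotone (Fin.le_last s)
    -- value of succAbove below the max
    have hvalI : ∀ t ∈ I', ((i₀.succAbove t : Fin (m'+1)) : ℕ) = (t : ℕ) := by
      intro t ht
      have hmem : i₀.succAbove t ∈ I.erase i₀ := by
        rw [← himI]; exact mem_image_of_mem _ ht
      have hlt : i₀.succAbove t < i₀ :=
        lt_of_le_of_ne (hmaxI _ (mem_of_mem_erase hmem)) (Fin.succAbove_ne _ _)
      rcases lt_or_ge (Fin.castSucc t) i₀ with hc | hc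
      · rw [Fin.succAbove_of_castSucc_lt _ _ hc]; rfl
      · exfalso
        rw [Fin.succAbove_of_le_castSucc _ _ hc] at hlt
        have h1 : (t : ℕ) + 1 < (i₀ : ℕ) := hlt
        have h2 : (i₀ : ℕ) ≤ (t : ℕ) := hc
        omega
    have hvalJ : ∀ t ∈ J', ((j₀.succAbove t : Fin (m'+1)) : ℕ) = (t : ℕ) := by
      intro t ht
      have hmem : j₀.succAbove t ∈ J.erase j₀ := by
        rw [← himJ]; exact mem_image_of_mem _ ht
      have hlt : j₀.succAbove t < j₀ :=
        lt_of_le_of_ne (hmaxJ _ (mem_of_mem_erase hmem)) (Fin.succAbove_ne _ _)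
      rcases lt_or_ge (Fin.castSucc t) j₀ with hc | hc
      · rw [Fin.succAbove_of_castSucc_lt _ _ hc]; rfl
      · exfalso
        rw [Fin.succAbove_of_le_castSucc _ _ hc] at hlt
        have h1 : (t : ℕ) + 1 < (j₀ : ℕ) := hlt
        have h2 : (j₀ : ℕ) ≤ (t : ℕ) := hc
        omega
    -- sums
    have hsumI : ∑ x ∈ I, (x : ℕ) = (i₀ : ℕ) + ∑ t ∈ I', (t : ℕ) := by
      rw [← Finset.add_sum_erase _ _ hi₀I, ← himI,
        sum_image (fun x _ y _ hxy => Fin.succAbove_right_injective hxy)]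
      exact congrArg _ (Finset.sum_congr rfl hvalI)
    have hsumJ : ∑ x ∈ J, (x : ℕ) = (j₀ : ℕ) + ∑ t ∈ J', (t : ℕ) := by
      rw [← Finset.add_sum_erase _ _ hj₀J, ← himJ,
        sum_image (fun x _ y _ hxy => Fin.succAbove_right_injective hxy)]
      exact congrArg _ (Finset.sum_congr rfl hvalJ)
    -- apply IH
    have hcol' : ∀ t : Fin k, ∀ r : Fin m',
        (A.submatrix j₀.succAbove i₀.succAbove) r (I'.orderEmbOfFin hI'c t) =
          if r = J'.orderEmbOfFin hJ'c t then 1 else 0 := by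
      intro t r
      rw [Matrix.submatrix_apply, E1 t, hcol t.castSucc (j₀.succAbove r), ← E2 t]
      simp [Fin.succAbove_right_injective.eq_iff]
    have hIH := ih m' (A.submatrix j₀.succAbove i₀.succAbove) I' J' hI'c hJ'c hcol'
    -- complement minors agree
    have hJ'cc : (J'ᶜ : Finset (Fin m')).card = m' - k := by
      rw [card_compl, hJ'c]; simp
    have hI'cc : (I'ᶜ : Finset (Fin m')).card = m' - k := by
      rw [card_compl, hI'c]; simp
    have hJcc : (Jᶜ : Finset (Fin (m'+1))).card = m' - k := by
      rw [card_compl, hJ]; simp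
    have hIcc : (Iᶜ : Finset (Fin (m'+1))).card = m' - k := by
      rw [card_compl, hI]; simp
    have E3 : ∀ p : Fin (m' - k), j₀.succAbove (J'ᶜ.orderEmbOfFin hJ'cc p) = Jᶜ.orderEmbOfFin hJcc p := by
      intro p
      refine congrFun (orderEmbOfFin_unique hJcc (fun s => ?_)
        (fun s t hst => Fin.strictMono_succAbove j₀ ((J'ᶜ.orderEmbOfFin hJ'cc).strictMono hst))) p
      rw [mem_compl]
      intro hmem
      have h7 : J'ᶜ.orderEmbOfFin hJ'cc s ∉ J' := mem_compl.mp (J'ᶜ.orderEmbOfFin_mem hJ'cc s)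
      exact h7 (mem_filter.mpr ⟨mem_univ _, hmem⟩)
    have E4 : ∀ p : Fin (m' - k), i₀.succAbove (I'ᶜ.orderEmbOfFin hI'cc p) = Iᶜ.orderEmbOfFin hIcc p := by
      intro p
      refine congrFun (orderEmbOfFin_unique hIcc (fun s => ?_)
        (fun s t hst => Fin.strictMono_succAbove i₀ ((I'ᶜ.orderEmbOfFin hI'cc).strictMono hst))) p
      rw [mem_compl]
      intro hmem
      have h7 : I'ᶜ.orderEmbOfFin hI'cc s ∉ I' := mem_compl.mp (I'ᶜ.orderEmbOfFin_mem hI'cc s)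
      exact h7 (mem_filter.mpr ⟨mem_univ _, hmem⟩)
    have hmin : minorF (A.submatrix j₀.succAbove i₀.succAbove) J'ᶜ I'ᶜ = minorF A Jᶜ Iᶜ := by
      rw [minorF_eq_det _ _ _ hJ'cc hI'cc, minorF_eq_det A _ _ hJcc hIcc]
      congr 1
      ext p q
      rw [Matrix.of_apply, Matrix.of_apply, Matrix.submatrix_apply, E3 p, E4 q]
    rw [hdet1, hIH, hmin, ← mul_assoc, ← pow_add, hsumI, hsumJ]
    congr 2
    omega

lemma jacobi {m : ℕ} (M : Matrix (Fin m) (Fin m) K) (hdet : M.det = 1)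
    (I J : Finset (Fin m)) (hcard : I.card = J.card) :
    minorF M⁻¹ I J = (-1 : K) ^ ((∑ x ∈ I, (x : ℕ)) + ∑ y ∈ J, (y : ℕ)) * minorF M Jᶜ Iᶜ := by
  classical
  have hunit : IsUnit M.det := by rw [hdet]; exact isUnit_one
  have hMul : M * M⁻¹ = 1 := Matrix.mul_nonsing_inv M hunit
  have hJk : J.card = I.card := hcard.symm
  have hiso : ∀ (q : Fin I.card) (hq : I.orderEmbOfFin rfl q ∈ I),
      (I.orderIsoOfFin rfl).symm ⟨I.orderEmbOfFin rfl q, hq⟩ = q := by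
    intro q hq
    rw [OrderIso.symm_apply_eq]
    exact Subtype.ext (Finset.coe_orderIsoOfFin_apply I rfl q).symm
  set X : Matrix (Fin m) (Fin m) K := fun r c =>
    if hc : c ∈ I then M⁻¹ r (J.orderEmbOfFin hJk ((I.orderIsoOfFin rfl).symm ⟨c, hc⟩))
    else if r = c then 1 else 0 with hXdef
  -- det X = minorF M⁻¹ I J
  have hX : X.det = minorF M⁻¹ I J := by
    have hcolX : ∀ t : Fin Iᶜ.card, ∀ r : Fin m,
        X r (Iᶜ.orderEmbOfFin rfl t) = if r = Iᶜ.orderEmbOfFin rfl t then 1 else 0 := by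
      intro t r
      simp only [hXdef]
      exact dif_neg (mem_compl.mp (Iᶜ.orderEmbOfFin_mem rfl t))
    have := key_expansion Iᶜ.card m X Iᶜ Iᶜ rfl rfl hcolX
    rw [Even.neg_one_pow (by exact Even.add_self _), one_mul] at this
    rw [this]
    have hccc : Iᶜᶜ.card = I.card := by rw [compl_compl]
    have hpq : ∀ u : Fin I.card, Iᶜᶜ.orderEmbOfFin hccc u = I.orderEmbOfFin rfl u := by
      have hcc : Iᶜᶜ = I := compl_compl I
      intro u
      refine congrFun (orderEmbOfFin_unique rfl (f := fun u => Iᶜᶜ.orderEmbOfFin hccc u)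
        (fun x => ?_) (Iᶜᶜ.orderEmbOfFin hccc).strictMono) u
      have hmm := Iᶜᶜ.orderEmbOfFin_mem hccc x
      simpa using hmm
    rw [minorF_eq_det X Iᶜᶜ Iᶜᶜ hccc hccc, minorF_eq_det M⁻¹ I J rfl hJk]
    congr 1
    ext p q
    simp only [Matrix.of_apply]
    rw [hpq p, hpq q]
    simp only [hXdef]
    rw [dif_pos (I.orderEmbOfFin_mem rfl q)]
    rw [hiso q (I.orderEmbOfFin_mem rfl q)]
  -- det (M * X)
  have hcolY : ∀ t : Fin I.card, ∀ r : Fin m,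
      (M * X) r (I.orderEmbOfFin rfl t) = if r = J.orderEmbOfFin hJk t then 1 else 0 := by
    intro t r
    rw [Matrix.mul_apply]
    have hXc : ∀ s, X s (I.orderEmbOfFin rfl t) = M⁻¹ s (J.orderEmbOfFin hJk t) := by
      intro s
      simp only [hXdef]
      rw [dif_pos (I.orderEmbOfFin_mem rfl t), hiso t (I.orderEmbOfFin_mem rfl t)]
    simp_rw [hXc]
    rw [← Matrix.mul_apply, hMul, Matrix.one_apply]
  have hY := key_expansion I.card m (M * X) I J rfl hJk hcolY
  have hYM : minorF (M * X) Jᶜ Iᶜ = minorF M Jᶜ Iᶜ := by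
    have hIcc : Iᶜ.card = Jᶜ.card := by rw [card_compl, card_compl, hcard]
    rw [minorF_eq_det (M * X) Jᶜ Iᶜ rfl hIcc, minorF_eq_det M Jᶜ Iᶜ rfl hIcc]
    congr 1
    ext p q
    simp only [Matrix.of_apply, Matrix.mul_apply]
    have hXc : ∀ s, X s (Iᶜ.orderEmbOfFin hIcc q) = if s = Iᶜ.orderEmbOfFin hIcc q then 1 else 0 := by
      intro s
      simp only [hXdef]
      exact dif_neg (mem_compl.mp (Iᶜ.orderEmbOfFin_mem hIcc q))
    simp_rw [hXc]
    simp
  rw [Matrix.det_mul, hdet, one_mul, hX, hYM] at hY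
  exact hY

/-- enumeration of the complement of a singleton in `Fin m` -/
def skipF {m : ℕ} (c : Fin m) (p : Fin (m - 1)) : Fin m :=
  ⟨if (p : ℕ) < (c : ℕ) then (p : ℕ) else (p : ℕ) + 1, by
    have h1 := p.isLt; have h2 := c.isLt; split <;> omega⟩

lemma skipF_val {m : ℕ} (c : Fin m) (p : Fin (m - 1)) :
    (skipF c p : ℕ) = if (p : ℕ) < (c : ℕ) then (p : ℕ) else (p : ℕ) + 1 := rfl

lemma skipF_mono {m : ℕ} (c : Fin m) : StrictMono (skipF c) := by
  intro p q hpq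
  have h := (Fin.lt_def).mp hpq
  rw [Fin.lt_def, skipF_val, skipF_val]
  split_ifs <;> omega

lemma skipF_mem {m : ℕ} (c : Fin m) (p : Fin (m - 1)) : skipF c p ∈ ({c}ᶜ : Finset (Fin m)) := by
  rw [mem_compl, mem_singleton]
  intro hcon
  have h := congrArg Fin.val hcon
  rw [skipF_val] at h
  split_ifs at h <;> omega

lemma compl_singleton_card {m : ℕ} (c : Fin m) : ({c}ᶜ : Finset (Fin m)).card = m - 1 := by
  rw [card_compl, card_singleton, Fintype.card_fin]

lemma compl_singleton_enum {m : ℕ} (c : Fin m) (p : Fin (m - 1)) :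
    ({c}ᶜ : Finset (Fin m)).orderEmbOfFin (compl_singleton_card c) p = skipF c p :=
  (congrFun (orderEmbOfFin_unique (compl_singleton_card c) (skipF_mem c) (skipF_mono c)) p).symm

lemma compl_singleton_det {m : ℕ} (M : Matrix (Fin m) (Fin m) K)
    (htri : ∀ p q : Fin m, p < q → M p q = 0) (hdiag : ∀ p, M p p = 1)
    (i j : Fin m) (hji : j ≤ i) :
    minorF M ({j}ᶜ) ({i}ᶜ) =
      Matrix.det (Matrix.of fun p q : Fin ((i : ℕ) - (j : ℕ)) =>
        M ⟨(j : ℕ) + 1 + p, by have := p.isLt; have := i.isLt; omega⟩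
          ⟨(j : ℕ) + q, by have := q.isLt; have := i.isLt; omega⟩) := by
  have hjile : (j : ℕ) ≤ (i : ℕ) := hji
  have him := i.isLt
  set W : Matrix (Fin (m - 1)) (Fin (m - 1)) K :=
    Matrix.of (fun p q => M (skipF j p) (skipF i q)) with hWdef
  have hmW : minorF M ({j}ᶜ) ({i}ᶜ) = W.det := by
    rw [minorF_eq_det M ({j}ᶜ) ({i}ᶜ) (compl_singleton_card j) (compl_singleton_card i)]
    congr 1
    ext p q
    rw [Matrix.of_apply, compl_singleton_enum, compl_singleton_enum]
    rfl
  rw [hmW]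
  have hsplit1 := Matrix.twoBlockTriangular_det' W (fun c => (c : ℕ) < (i : ℕ)) (by
    intro p hp q hq
    simp only [hWdef, Matrix.of_apply]
    apply htri
    rw [Fin.lt_def, skipF_val, skipF_val]
    simp only [not_lt] at hq
    split_ifs <;> omega)
  beta_reduce at hsplit1
  have hbot : (Matrix.toSquareBlockProp W fun c => ¬ ((c : ℕ) < (i : ℕ))).det = 1 := by
    rw [Matrix.det_of_lowerTriangular _ (by
      intro x y hxy
      have h3 : x < y := hxy
      have h3' : ((x : {a : Fin (m-1) // ¬ ((a : ℕ) < (i : ℕ))}).val : ℕ) < (y.val : ℕ) := h3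
      simp only [hWdef, Matrix.toSquareBlockProp, Matrix.toBlock_apply, Matrix.of_apply]
      apply htri
      rw [Fin.lt_def, skipF_val, skipF_val]
      have h1 : ¬ ((x.val : ℕ) < (i : ℕ)) := x.2
      have h2 : ¬ ((y.val : ℕ) < (i : ℕ)) := y.2
      split_ifs <;> omega)]
    apply Finset.prod_eq_one
    intro x _
    simp only [hWdef, Matrix.toSquareBlockProp, Matrix.toBlock_apply, Matrix.of_apply]
    have h1 : ¬ ((x.val : ℕ) < (i : ℕ)) := x.2
    have he : skipF j x.val = skipF i x.val := by
      apply Fin.ext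
      rw [skipF_val, skipF_val]
      split_ifs <;> omega
    rw [he, hdiag]
  set V : Matrix {a : Fin (m-1) // (a : ℕ) < (i : ℕ)} {a : Fin (m-1) // (a : ℕ) < (i : ℕ)} K :=
    Matrix.toSquareBlockProp W (fun c => (c : ℕ) < (i : ℕ)) with hVdef
  have hsplit2 := Matrix.twoBlockTriangular_det' V (fun c => ((c : Fin (m-1)) : ℕ) < (j : ℕ)) (by
    intro p hp q hq
    simp only [hVdef, hWdef, Matrix.toSquareBlockProp, Matrix.toBlock_apply, Matrix.of_apply]
    apply htri
    rw [Fin.lt_def, skipF_val, skipF_val]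
    have h2 : (q.val : ℕ) < (i : ℕ) := q.2
    simp only [not_lt] at hq
    split_ifs <;> omega)
  beta_reduce at hsplit2
  have hleft : (Matrix.toSquareBlockProp V fun c => (((c : Fin (m-1)) : ℕ) < (j : ℕ))).det = 1 := by
    rw [Matrix.det_of_lowerTriangular _ (by
      intro x y hxy
      have h3 : x < y := hxy
      have h3' : ((x.val.val : Fin (m-1)) : ℕ) < (y.val.val : ℕ) := h3
      simp only [hVdef, hWdef, Matrix.toSquareBlockProp, Matrix.toBlock_apply, Matrix.of_apply]
      apply htri
      rw [Fin.lt_def, skipF_val, skipF_val]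
      have h1 : ((x.val.val : Fin (m-1)) : ℕ) < (j : ℕ) := x.2
      have h2 : ((y.val.val : Fin (m-1)) : ℕ) < (j : ℕ) := y.2
      split_ifs <;> omega)]
    apply Finset.prod_eq_one
    intro x _
    simp only [hVdef, hWdef, Matrix.toSquareBlockProp, Matrix.toBlock_apply, Matrix.of_apply]
    have h1 : ((x.val.val : Fin (m-1)) : ℕ) < (j : ℕ) := x.2
    have he : skipF j x.val.val = skipF i x.val.val := by
      apply Fin.ext
      rw [skipF_val, skipF_val]
      split_ifs <;> omega
    rw [he, hdiag]
  have htop : (Matrix.toSquareBlockProp V fun c => ¬ (((c : Fin (m-1)) : ℕ) < (j : ℕ))).det =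
      Matrix.det (Matrix.of fun p q : Fin ((i : ℕ) - (j : ℕ)) =>
        M ⟨(j : ℕ) + 1 + p, by have := p.isLt; omega⟩
          ⟨(j : ℕ) + q, by have := q.isLt; omega⟩) := by
    have hmlt : ∀ t : Fin ((i : ℕ) - (j : ℕ)), (j : ℕ) + (t : ℕ) < m - 1 := by
      intro t; have := t.isLt; omega
    let e : Fin ((i : ℕ) - (j : ℕ)) ≃
        {x : {a : Fin (m-1) // (a : ℕ) < (i : ℕ)} // ¬ (((x : Fin (m-1)) : ℕ) < (j : ℕ))} :=
      { toFun := fun t => ⟨⟨⟨(j : ℕ) + t, hmlt t⟩, by simp; have := t.isLt; omega⟩, by simp⟩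
        invFun := fun s => ⟨(s.val.val : ℕ) - (j : ℕ), by
          have h1 := s.val.2
          have h2 := s.2
          simp only [not_lt] at h2
          omega⟩
        left_inv := by
          intro t
          apply Fin.ext
          simp
        right_inv := by
          intro s
          apply Subtype.ext
          apply Subtype.ext
          apply Fin.ext
          have h2 := s.2
          simp only [not_lt] at h2
          simp
          omega }
    rw [← Matrix.det_submatrix_equiv_self e]
    congr 1
    ext p q
    simp only [Matrix.submatrix_apply, hVdef, hWdef, Matrix.toSquareBlockProp,
      Matrix.toBlock_apply, Matrix.of_apply]
    congr 1
    · apply Fin.ext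
      rw [skipF_val]
      simp only [e, Equiv.coe_fn_mk]
      have := p.isLt
      split_ifs <;> omega
    · apply Fin.ext
      rw [skipF_val]
      simp only [e, Equiv.coe_fn_mk]
      have := q.isLt
      split_ifs <;> omega
  rw [hsplit1, hbot, mul_one, hsplit2, hleft, one_mul, htop]

lemma minor_eq_det {k : ℕ} (C' : ℤ → ℤ → K) (S T : Finset ℤ) (hS : S.card = k) (hT : T.card = k) :
    minor C' S T = Matrix.det (Matrix.of fun p q : Fin k =>
      C' (S.orderEmbOfFin hS p) (T.orderEmbOfFin hT q)) := by
  subst hS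
  rw [minor, dif_pos hT]

lemma Icc_enum (u v : ℤ) {d : ℕ} (hd : (Finset.Icc u v).card = d) (t : Fin d) :
    (Finset.Icc u v).orderEmbOfFin hd t = u + (t : ℤ) := by
  refine (congrFun (orderEmbOfFin_unique hd (f := fun t : Fin d => u + (t : ℤ)) ?_ ?_) t).symm
  · intro x
    have hx := x.isLt
    rw [Int.card_Icc] at hd
    have hmem : u ≤ u + ((x : ℕ) : ℤ) ∧ u + ((x : ℕ) : ℤ) ≤ v := by omega
    exact Finset.mem_Icc.mpr hmem
  · intro x y hxy
    have hvlt : (x : ℕ) < (y : ℕ) := hxy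
    show u + ((x : ℕ) : ℤ) < u + ((y : ℕ) : ℤ)
    omega

def liftSet (a : ℤ) (m : ℕ) (S : Finset ℤ) : Finset (Fin m) :=
  univ.filter (fun i => a + (i : ℤ) ∈ S)

lemma liftSet_card {a b : ℤ} {m : ℕ} (hm : (Finset.Icc a b).card = m) (S : Finset ℤ)
    (hS : S ⊆ Finset.Icc a b) : (liftSet a m S).card = S.card := by
  have himg : (liftSet a m S).image (fun i : Fin m => a + (i : ℤ)) = S := by
    ext x
    simp only [mem_image, liftSet, mem_filter, mem_univ, true_and]
    constructor
    · rintro ⟨i, hi, rfl⟩; exact hi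
    · intro hx
      have hx2 := hS hx
      rw [Finset.mem_Icc] at hx2
      rw [Int.card_Icc] at hm
      refine ⟨⟨(x - a).toNat, by omega⟩, ?_, by simp; omega⟩
      have hval : a + ((⟨(x - a).toNat, by omega⟩ : Fin m) : ℤ) = x := by simp; omega
      rw [hval]; exact hx
  have hinj := Finset.card_image_of_injOn (s := liftSet a m S)
    (f := fun i : Fin m => a + (i : ℤ)) (by
      intro i _ j _ hij
      have hij2 : a + (i : ℤ) = a + (j : ℤ) := hij
      apply Fin.ext
      omega)
  rw [himg] at hinj
  exact hinj.symm

lemma liftSet_enum {a b : ℤ} {m : ℕ} (hm : (Finset.Icc a b).card = m) (S : Finset ℤ)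
    (hS : S ⊆ Finset.Icc a b) {k : ℕ} (hk : S.card = k) (hk' : (liftSet a m S).card = k)
    (t : Fin k) :
    S.orderEmbOfFin hk t = a + (((liftSet a m S).orderEmbOfFin hk' t : Fin m) : ℤ) := by
  refine (congrFun (orderEmbOfFin_unique hk
    (f := fun t => a + (((liftSet a m S).orderEmbOfFin hk' t : Fin m) : ℤ)) ?_ ?_) t).symm
  · intro x
    exact (mem_filter.mp ((liftSet a m S).orderEmbOfFin_mem hk' x)).2
  · intro x y hxy
    have h2 : (((liftSet a m S).orderEmbOfFin hk' x : Fin m) : ℕ)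
        < (((liftSet a m S).orderEmbOfFin hk' y : Fin m) : ℕ) :=
      ((liftSet a m S).orderEmbOfFin hk').strictMono hxy
    show a + _ < a + _
    omega

lemma liftSet_compl {a b : ℤ} {m : ℕ} (hm : (Finset.Icc a b).card = m) (S : Finset ℤ) :
    liftSet a m (Finset.Icc a b \ S) = (liftSet a m S)ᶜ := by
  ext i
  have hi := i.isLt
  rw [Int.card_Icc] at hm
  have hmem : a + (i : ℤ) ∈ Finset.Icc a b := by
    rw [Finset.mem_Icc]
    omega
  simp only [liftSet, mem_filter, mem_univ, true_and, mem_compl, Finset.mem_sdiff]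
  tauto

lemma minor_eq_minorF {a b : ℤ} {m : ℕ} (hm : (Finset.Icc a b).card = m) (C' : ℤ → ℤ → K)
    (S T : Finset ℤ) (hS : S ⊆ Finset.Icc a b) (hT : T ⊆ Finset.Icc a b)
    (hc : T.card = S.card) :
    minor C' S T = minorF (Matrix.of fun i j : Fin m => C' (a + (i : ℤ)) (a + (j : ℤ)))
      (liftSet a m S) (liftSet a m T) := by
  rw [minor_eq_det C' S T rfl hc, minorF_eq_det _ _ _ (liftSet_card hm S hS)
    ((liftSet_card hm T hT).trans hc)]
  congr 1
  ext p q
  rw [Matrix.of_apply, Matrix.of_apply, Matrix.of_apply,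
    liftSet_enum hm S hS rfl (liftSet_card hm S hS) p,
    liftSet_enum hm T hT hc ((liftSet_card hm T hT).trans hc) q]

lemma image_orderEmbOfFin {m k : ℕ} (S : Finset (Fin m)) (hk : S.card = k) :
    univ.image (S.orderEmbOfFin hk) = S := by
  ext x
  simp only [mem_image, mem_univ, true_and]
  constructor
  · rintro ⟨p, rfl⟩; exact S.orderEmbOfFin_mem hk p
  · intro hx
    have hr : x ∈ Set.range (S.orderEmbOfFin hk) := by
      rw [range_orderEmbOfFin]; exact hx
    obtain ⟨p, rfl⟩ := hr
    exact ⟨p, rfl⟩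

lemma prod_neg_one_emb {m k : ℕ} (S : Finset (Fin m)) (hk : S.card = k) :
    (∏ p : Fin k, (-1 : K) ^ ((S.orderEmbOfFin hk p : Fin m) : ℕ))
      = (-1 : K) ^ (∑ x ∈ S, (x : ℕ)) := by
  rw [Finset.prod_pow_eq_pow_sum]
  congr 1
  apply Finset.sum_bij (fun p _ => S.orderEmbOfFin hk p)
  · intro p _
    exact S.orderEmbOfFin_mem hk p
  · intro p _ q _ hpq
    exact (S.orderEmbOfFin hk).injective hpq
  · intro x hx
    have hr : x ∈ Set.range (S.orderEmbOfFin hk) := by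
      rw [range_orderEmbOfFin]; exact hx
    obtain ⟨p, rfl⟩ := hr
    exact ⟨p, mem_univ p, rfl⟩
  · intro p _
    rfl

/-- **Minors of the dual.** Let `C` be a `π`-prefrieze (with `π` of period `n` and `h`
balls) and let `I`, `J` be subsets of equal cardinality of an interval `[a,b]` with
`b - a < n`.  Then `det(C†_{I,J}) = det(C_{[a,b]∖J, [a,b]∖I})`. -/
theorem minor_dualMat (n h : ℕ) (π : ℤ ≃ ℤ) (hπ : IsJuggling n π)
    (hballs : HasBalls n π h) (C : ℤ → ℤ → K) (hC : IsPrefrieze π C)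
    (a b : ℤ) (hab : b - a < n) (I J : Finset ℤ)
    (hI : I ⊆ Finset.Icc a b) (hJ : J ⊆ Finset.Icc a b) (hcard : I.card = J.card) :
    minor (dualMat n h π C) I J = minor C (Finset.Icc a b \ J) (Finset.Icc a b \ I) := by
  classical
  set m := (b + 1 - a).toNat with hmdef
  have hm : (Finset.Icc a b).card = m := by rw [hmdef]; exact Int.card_Icc a b
  set M : Matrix (Fin m) (Fin m) K :=
    Matrix.of (fun i j : Fin m => C (a + (i : ℤ)) (a + (j : ℤ))) with hMdef
  have hC0 : ∀ x y : ℤ, x < y → C x y = 0 := fun x y hxy =>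
    (hC x y).2.2 (Or.inl (fun hh => absurd hh.1 (not_le.mpr hxy)))
  have hC1 : ∀ x : ℤ, C x x = 1 := fun x => (hC x x).1 rfl
  have htri : ∀ p q : Fin m, p < q → M p q = 0 := by
    intro p q hpq
    have h1 : (p : ℕ) < (q : ℕ) := hpq
    apply hC0
    omega
  have hdiag : ∀ p : Fin m, M p p = 1 := fun p => hC1 _
  have hbt : M.BlockTriangular OrderDual.toDual := fun x y hxy => htri x y hxy
  have hdet : M.det = 1 := by
    rw [Matrix.det_of_lowerTriangular M hbt]
    exact Finset.prod_eq_one fun x _ => hdiag x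
  have hunit : IsUnit M.det := by rw [hdet]; exact isUnit_one
  have : Invertible M := M.invertibleOfIsUnitDet hunit
  have hinv_bt : (M⁻¹).BlockTriangular OrderDual.toDual :=
    Matrix.blockTriangular_inv_of_blockTriangular hbt
  have hinvtri : ∀ p q : Fin m, p < q → M⁻¹ p q = 0 := fun p q hpq => hinv_bt hpq
  -- entrywise description of the dual matrix on the band
  have hent : ∀ i j : Fin m, dualMat n h π C (a + (i : ℤ)) (a + (j : ℤ))
      = (-1 : K) ^ ((i : ℕ) + (j : ℕ)) * M⁻¹ i j := by
    intro i j
    rcases lt_or_ge i j with hij | hij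
    · have h1 : (i : ℕ) < (j : ℕ) := hij
      simp only [dualMat]
      rw [if_neg (by rintro ⟨h2, -⟩; omega), if_neg (by rintro ⟨-, h2⟩; omega),
        hinvtri i j hij, mul_zero]
    · have h1 : (j : ℕ) ≤ (i : ℕ) := hij
      have h2 := i.isLt
      simp only [dualMat]
      rw [if_pos (by constructor <;> omega)]
      have hj1 := jacobi M hdet {i} {j} (by simp)
      rw [Finset.sum_singleton, Finset.sum_singleton] at hj1
      have h1x : minorF M⁻¹ {i} {j} = M⁻¹ i j := by
        rw [minorF_eq_det M⁻¹ {i} {j} (card_singleton i) (card_singleton j),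
          Matrix.det_fin_one]
        simp
      have hBT := compl_singleton_det M htri hdiag i j hij
      have hkey : (-1 : K) ^ ((i : ℕ) + (j : ℕ)) * M⁻¹ i j = minorF M ({j}ᶜ) ({i}ᶜ) := by
        rw [← h1x, hj1, ← mul_assoc, ← pow_add,
          Even.neg_one_pow ⟨(i : ℕ) + (j : ℕ), rfl⟩, one_mul]
      rw [hkey, hBT]
      have hSc : (Finset.Icc (a + (j : ℤ) + 1) (a + (i : ℤ))).card = (i : ℕ) - (j : ℕ) := by
        rw [Int.card_Icc]; omega
      have hTc : (Finset.Icc (a + (j : ℤ)) (a + (i : ℤ) - 1)).card = (i : ℕ) - (j : ℕ) := by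
        rw [Int.card_Icc]; omega
      rw [minor_eq_det C _ _ hSc hTc]
      congr 1
      ext p q
      rw [Matrix.of_apply, Matrix.of_apply, Icc_enum _ _ hSc p, Icc_enum _ _ hTc q]
      show C _ _ = C (a + _) (a + _)
      congr 1 <;> push_cast <;> ring
  -- translate both sides to Fin m minors
  have hkI : (liftSet a m I).card = I.card := liftSet_card hm I hI
  have hkJ : (liftSet a m J).card = J.card := liftSet_card hm J hJ
  have hLHS : minor (dualMat n h π C) I J =
      minorF (Matrix.of fun i j : Fin m => dualMat n h π C (a + (i : ℤ)) (a + (j : ℤ)))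
        (liftSet a m I) (liftSet a m J) :=
    minor_eq_minorF hm _ I J hI hJ hcard.symm
  have hRHS : minor C (Finset.Icc a b \ J) (Finset.Icc a b \ I) =
      minorF M ((liftSet a m J)ᶜ) ((liftSet a m I)ᶜ) := by
    have hmm := minor_eq_minorF hm C (Finset.Icc a b \ J) (Finset.Icc a b \ I)
      sdiff_subset sdiff_subset (by rw [card_sdiff_of_subset hI, card_sdiff_of_subset hJ, hcard])
    rw [hmm, liftSet_compl hm, liftSet_compl hm, ← hMdef]
  set k := I.card with hkdef
  have hkI' : (liftSet a m I).card = k := hkI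
  have hkJ' : (liftSet a m J).card = k := by rw [hkJ, ← hcard]
  -- pull the signs out
  set u : Fin k → K := fun p => (-1 : K) ^ (((liftSet a m I).orderEmbOfFin hkI' p : Fin m) : ℕ)
    with hudef
  set w : Fin k → K := fun q => (-1 : K) ^ (((liftSet a m J).orderEmbOfFin hkJ' q : Fin m) : ℕ)
    with hwdef
  set B : Matrix (Fin k) (Fin k) K := Matrix.of fun p q =>
    M⁻¹ ((liftSet a m I).orderEmbOfFin hkI' p) ((liftSet a m J).orderEmbOfFin hkJ' q) with hBdef
  have hpull : minorF (Matrix.of fun i j : Fin m => dualMat n h π C (a + (i : ℤ)) (a + (j : ℤ)))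
      (liftSet a m I) (liftSet a m J)
      = (-1 : K) ^ ((∑ x ∈ liftSet a m I, (x : ℕ)) + ∑ y ∈ liftSet a m J, (y : ℕ))
        * minorF M⁻¹ (liftSet a m I) (liftSet a m J) := by
    rw [minorF_eq_det _ _ _ hkI' hkJ', minorF_eq_det M⁻¹ _ _ hkI' hkJ']
    have hD : (Matrix.of fun p q : Fin k =>
        (Matrix.of fun i j : Fin m => dualMat n h π C (a + (i : ℤ)) (a + (j : ℤ)))
          ((liftSet a m I).orderEmbOfFin hkI' p) ((liftSet a m J).orderEmbOfFin hkJ' q))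
        = Matrix.of (fun p q : Fin k => u p * (Matrix.of (fun p' q' : Fin k => w q' * B p' q')) p q) := by
      ext p q
      simp only [Matrix.of_apply, hudef, hwdef, hBdef]
      rw [hent, pow_add]
      ring
    rw [hD, Matrix.det_mul_column u, Matrix.det_mul_row w, hudef, hwdef,
      prod_neg_one_emb _ hkI', prod_neg_one_emb _ hkJ', hBdef, pow_add]
    ring
  have hjac := jacobi M hdet (liftSet a m I) (liftSet a m J) (by rw [hkI', hkJ'])
  rw [hLHS, hRHS, hpull, hjac, ← mul_assoc, ← pow_add,
    Even.neg_one_pow ⟨_, rfl⟩, one_mul]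
end

section
/- Let 𝕜 be a field and let A be a k×n matrix over 𝕜 of rank k. Then for any subset I ⊆ {1,…,n}, rank(A_I) = dim(ker(A)_{[n]∖I}) + |I| − (n − k), where A_I is the submatrix of A consisting of the columns indexed by I, ker(A) := { v ∈ 𝕜^n : Av = 0 }, and ker(A)_{[n]∖I} denotes the image of ker(A) under the coordinate projection 𝕜^n → 𝕜^{[n]∖I}. -/
open Finset

variable {K : Type*} [Field K]

/-- **Rank of a column submatrix via the kernel.** Let `A` be a `k × n` matrix of rank
`k` over a field `K`.  For any set `I` of columns,
`rank(A_I) = dim(ker(A)_{[n]∖I}) + |I| − (n − k)`, where `ker(A)_{[n]∖I}` is the image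
of the kernel of `A` under the coordinate projection `K^n → K^([n]∖I)`. -/
theorem rank_cols_eq_dim_ker_proj (k n : ℕ) (A : Matrix (Fin k) (Fin n) K)
    (hA : A.rank = k) (I : Finset (Fin n)) :
    (Matrix.rank (Matrix.of fun (i : Fin k) (j : {x : Fin n // x ∈ I}) => A i j.1) : ℤ)
      = (Module.finrank K (Submodule.map
            (LinearMap.funLeft K K (fun j : {x : Fin n // x ∈ Iᶜ} => (j : Fin n)))
            (LinearMap.ker A.mulVecLin)) : ℤ)
        + (I.card : ℤ) - ((n : ℤ) - (k : ℤ)) := by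
  classical
  set f := A.mulVecLin with hf
  set B := Matrix.of fun (i : Fin k) (j : {x : Fin n // x ∈ I}) => A i j.1 with hB
  set g := LinearMap.funLeft K K (fun j : {x : Fin n // x ∈ Iᶜ} => (j : Fin n)) with hg
  -- extension by zero
  let e : ({x : Fin n // x ∈ I} → K) →ₗ[K] (Fin n → K) :=
    { toFun := fun x j => if h : j ∈ I then x ⟨j, h⟩ else 0
      map_add' := by intro x y; funext j; by_cases h : j ∈ I <;> simp [h]
      map_smul' := by intro c x; funext j; by_cases h : j ∈ I <;> simp [h] }
  have he : Function.Injective e := by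
    intro x y hxy
    funext j
    have := congrFun hxy j.1
    simpa [e, j.2] using this
  have hcomp : B.mulVecLin = f ∘ₗ e := by
    apply LinearMap.ext; intro x
    funext i
    simp only [hf, LinearMap.comp_apply, Matrix.mulVecLin_apply, Matrix.mulVec,
      dotProduct, hB, Matrix.of_apply]
    have h0 : ∀ j ∈ Finset.univ, j ∉ I → A i j * e x j = 0 := by
      intro j _ hj
      show A i j * (if h : j ∈ I then x ⟨j, h⟩ else 0) = 0
      rw [dif_neg hj, mul_zero]
    rw [← Finset.sum_subset (Finset.subset_univ I) h0,
      Finset.sum_subtype I (fun j => Iff.rfl) (fun j => A i j * e x j)]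
    apply Finset.sum_congr rfl
    intro j _
    show A i j.1 * x j = A i j.1 * (if h : (j : Fin n) ∈ I then x ⟨j, h⟩ else 0)
    rw [dif_pos j.2]
  have hkerg : LinearMap.ker g = LinearMap.range e := by
    ext v
    simp only [hg, LinearMap.mem_ker, LinearMap.funLeft_apply, LinearMap.mem_range]
    constructor
    · intro h
      refine ⟨fun j => v j.1, ?_⟩
      funext j
      by_cases hj : j ∈ I
      · simp [e, hj]
      · have h0 := congrFun h ⟨j, Finset.mem_compl.mpr hj⟩
        simp only [LinearMap.funLeft_apply, Pi.zero_apply] at h0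
        show (if h : j ∈ I then v j else 0) = v j
        simp [hj, h0]
    · rintro ⟨x, rfl⟩
      funext j
      have hj : (j : Fin n) ∉ I := Finset.mem_compl.mp j.2
      simp [e, hj]
  -- rank-nullity on B.mulVecLin
  have h1 : B.rank + Module.finrank K (LinearMap.ker B.mulVecLin) = I.card := by
    have := LinearMap.finrank_range_add_finrank_ker B.mulVecLin
    rw [Module.finrank_fintype_fun_eq_card, Fintype.card_coe] at this
    rw [Matrix.rank]
    exact this
  -- rank-nullity on f
  have h2 : Module.finrank K (LinearMap.ker f) = n - k := by
    have := LinearMap.finrank_range_add_finrank_ker f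
    rw [Module.finrank_fintype_fun_eq_card, Fintype.card_fin] at this
    have hr : Module.finrank K (LinearMap.range f) = k := hA
    omega
  have hkn : k ≤ n := by
    have := LinearMap.finrank_range_add_finrank_ker f
    rw [Module.finrank_fintype_fun_eq_card, Fintype.card_fin] at this
    have hr : Module.finrank K (LinearMap.range f) = k := hA
    omega
  -- rank-nullity on g restricted to ker f
  have h3 : Module.finrank K (Submodule.map g (LinearMap.ker f))
      + Module.finrank K (LinearMap.ker (g.domRestrict (LinearMap.ker f)))
      = Module.finrank K (LinearMap.ker f) := by
    have := LinearMap.finrank_range_add_finrank_ker (g.domRestrict (LinearMap.ker f))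
    rwa [LinearMap.range_domRestrict] at this
  -- identify ker of restriction with ker f ⊓ ker g
  have h4 : Module.finrank K (LinearMap.ker (g.domRestrict (LinearMap.ker f)))
      = Module.finrank K (LinearMap.ker f ⊓ LinearMap.ker g : Submodule K (Fin n → K)) := by
    rw [LinearMap.ker_domRestrict]
    rw [← Submodule.map_comap_subtype]
    exact (Submodule.equivSubtypeMap _ _).finrank_eq
  -- identify ker f ⊓ ker g with ker B
  have h5 : (LinearMap.ker f ⊓ LinearMap.ker g : Submodule K (Fin n → K))
      = Submodule.map e (LinearMap.ker B.mulVecLin) := by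
    rw [hcomp, LinearMap.ker_comp, Submodule.map_comap_eq, hkerg, inf_comm]
  have h6 : Module.finrank K (Submodule.map e (LinearMap.ker B.mulVecLin))
      = Module.finrank K (LinearMap.ker B.mulVecLin) :=
    (Submodule.equivMapOfInjective e he _).finrank_eq.symm
  have key : Module.finrank K (Submodule.map g (LinearMap.ker f))
      + Module.finrank K (LinearMap.ker B.mulVecLin) = n - k := by
    rw [← h2, ← h3, h4, h5, h6]
  have hIcard : I.card ≤ n := by
    simpa using Finset.card_le_card (Finset.subset_univ I)
  omega
end

section
/- Let π be a juggling function of period n with h balls and let π† be its dual juggling function. Then for every a ∈ ℤ: (π(a) − a) + |S_{π†}(π(a), a+n)| − |S_π(a, π(a))| = h. -/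
open Finset

variable {K : Type*} [Field K]

noncomputable def ballCount (n : ℕ) (π : ℤ ≃ ℤ) (t : ℤ) : ℕ :=
  ((Finset.Icc (t - (n:ℤ) + 1) t).filter (fun i => t < π i)).card

section
variable {n : ℕ} {π : ℤ ≃ ℤ}

lemma symm_le (hπ : IsJuggling n π) (v : ℤ) : π.symm v ≤ v := by
  have := hπ.le_self (π.symm v); simpa using this

lemma le_symm_add (hπ : IsJuggling n π) (v : ℤ) : v ≤ π.symm v + n := by
  have := hπ.le_add (π.symm v); simpa using this

lemma count_succ (hπ : IsJuggling n π) (t : ℤ) :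
    ballCount n π (t+1) = ballCount n π t := by
  unfold ballCount
  by_cases h1 : π (t+1) = t+1
  · congr 1
    ext i
    simp only [mem_filter, mem_Icc]
    constructor
    · rintro ⟨⟨h2, h3⟩, h4⟩
      have hi : i ≠ t + 1 := by intro he; rw [he, h1] at h4; omega
      have ha := hπ.le_add i
      exact ⟨⟨by omega, by omega⟩, by omega⟩
    · rintro ⟨⟨h2, h3⟩, h4⟩
      have hne : π i ≠ t + 1 := by
        intro he
        have : i = t + 1 := π.injective (by rw [he, h1])
        omega
      have ha := hπ.le_add i
      exact ⟨⟨by omega, by omega⟩, by omega⟩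
  · have hlt : t + 1 < π (t+1) := lt_of_le_of_ne (hπ.le_self _) (Ne.symm h1)
    have hsle : π.symm (t+1) ≤ t := by
      have h2 := symm_le hπ (t+1)
      have h3 : π.symm (t+1) ≠ t + 1 := by
        intro he; apply h1
        conv_lhs => rw [← he]
        exact π.apply_symm_apply _
      omega
    have hsge : t + 1 - n ≤ π.symm (t+1) := by
      have := le_symm_add hπ (t+1); omega
    have hnp := hπ.npos
    have hmem : π.symm (t+1) ∈ (Finset.Icc (t - (n:ℤ) + 1) t).filter (fun i => t < π i) := by
      simp only [mem_filter, mem_Icc, Equiv.apply_symm_apply]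
      omega
    have hset : (Finset.Icc (t + 1 - (n:ℤ) + 1) (t+1)).filter (fun i => t+1 < π i)
        = insert (t+1) (((Finset.Icc (t - (n:ℤ) + 1) t).filter (fun i => t < π i)).erase (π.symm (t+1))) := by
      ext i
      simp only [mem_insert, mem_erase, mem_filter, mem_Icc]
      constructor
      · rintro ⟨⟨h2, h3⟩, h4⟩
        by_cases hi : i = t+1
        · left; exact hi
        · right
          have ha := hπ.le_add i
          have hne : i ≠ π.symm (t+1) := by
            intro he
            rw [he, Equiv.apply_symm_apply] at h4; omega
          exact ⟨hne, ⟨by omega, by omega⟩, by omega⟩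
      · rintro (rfl | ⟨hne, ⟨h2, h3⟩, h4⟩)
        · exact ⟨⟨by omega, le_refl _⟩, hlt⟩
        · have ha := hπ.le_add i
          have hne2 : π i ≠ t+1 := by
            intro he
            apply hne
            rw [← he, Equiv.symm_apply_apply]
          exact ⟨⟨by omega, by omega⟩, by omega⟩
    rw [hset, Finset.card_insert_of_notMem, Finset.card_erase_of_mem hmem]
    · have hpos : 0 < ((Finset.Icc (t - (n:ℤ) + 1) t).filter (fun i => t < π i)).card :=
        Finset.card_pos.mpr ⟨_, hmem⟩
      omega
    · intro hc
      simp only [mem_erase, mem_filter, mem_Icc] at hc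
      omega

lemma count_const (hπ : IsJuggling n π) (t : ℤ) : ballCount n π t = ballCount n π 0 := by
  induction t using Int.induction_on with
  | zero => rfl
  | succ k ih => rw [count_succ hπ]; exact ih
  | pred k ih =>
      have h2 := count_succ hπ (-(k:ℤ) - 1)
      have h3 : (-(k:ℤ) - 1 + 1) = -(k:ℤ) := by ring
      rw [h3] at h2
      rw [show (-(k:ℤ) - 1) = (-(k:ℤ) - 1) from rfl, ← h2]
      exact ih
lemma sum_count (hπ : IsJuggling n π) :
    ∑ t ∈ Finset.Icc (1:ℤ) (n:ℤ), ((ballCount n π t : ℤ)) =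
      ∑ i ∈ Finset.Icc (1:ℤ) (n:ℤ), (π i - i) := by
  have hnp := hπ.npos
  -- step 1: rewrite each ballCount as a filter over a fixed index set
  have step1 : ∀ t ∈ Finset.Icc (1:ℤ) (n:ℤ),
      ((ballCount n π t : ℤ)) =
        ((((Finset.Icc (1-(n:ℤ)) (n:ℤ)).filter (fun i => i ≤ t ∧ t < π i)).card : ℤ)) := by
    intro t ht
    simp only [mem_Icc] at ht
    unfold ballCount
    congr 2
    ext i
    simp only [mem_filter, mem_Icc]
    have ha := hπ.le_add i
    constructor
    · rintro ⟨⟨h2, h3⟩, h4⟩; exact ⟨⟨by omega, by omega⟩, by omega, by omega⟩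
    · rintro ⟨⟨h2, h3⟩, h4, h5⟩; exact ⟨⟨by omega, by omega⟩, by omega⟩
  rw [Finset.sum_congr rfl step1]
  -- step 2: swap the order of counting
  have step2 : ∑ t ∈ Finset.Icc (1:ℤ) (n:ℤ),
      (((Finset.Icc (1-(n:ℤ)) (n:ℤ)).filter (fun i => i ≤ t ∧ t < π i)).card)
      = ∑ i ∈ Finset.Icc (1-(n:ℤ)) (n:ℤ),
      (((Finset.Icc (1:ℤ) (n:ℤ)).filter (fun t => i ≤ t ∧ t < π i)).card) := by
    simp_rw [Finset.card_filter]
    exact Finset.sum_comm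
  rw [← Nat.cast_sum, step2, Nat.cast_sum]
  -- step 3: split the index set
  have hsplit : Finset.Icc (1-(n:ℤ)) (n:ℤ) = Finset.Ioc (-(n:ℤ)) (n:ℤ) := by
    ext i; simp only [mem_Icc, mem_Ioc]; omega
  rw [hsplit]
  have hjoin : (∑ i ∈ Finset.Ioc (-(n:ℤ)) (0:ℤ),
        ((((Finset.Icc (1:ℤ) (n:ℤ)).filter (fun t => i ≤ t ∧ t < π i)).card : ℤ)))
      + (∑ i ∈ Finset.Ioc (0:ℤ) (n:ℤ),
        ((((Finset.Icc (1:ℤ) (n:ℤ)).filter (fun t => i ≤ t ∧ t < π i)).card : ℤ)))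
      = ∑ i ∈ Finset.Ioc (-(n:ℤ)) (n:ℤ),
        ((((Finset.Icc (1:ℤ) (n:ℤ)).filter (fun t => i ≤ t ∧ t < π i)).card : ℤ)) := by
    rw [← Finset.Ioc_union_Ioc_eq_Ioc (show -(n:ℤ) ≤ 0 by omega) (show (0:ℤ) ≤ (n:ℤ) by omega),
      Finset.sum_union (by simp only [Finset.disjoint_left, mem_Ioc]; intro x hx hx2; omega)]
  rw [← hjoin]
  -- step 4: reindex the negative part
  have hre : (∑ i ∈ Finset.Ioc (-(n:ℤ)) (0:ℤ),
        ((((Finset.Icc (1:ℤ) (n:ℤ)).filter (fun t => i ≤ t ∧ t < π i)).card : ℤ)))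
      = ∑ i ∈ Finset.Ioc (0:ℤ) (n:ℤ),
        ((((Finset.Icc (1:ℤ) (n:ℤ)).filter (fun t => i - n ≤ t ∧ t < π (i - n))).card : ℤ)) := by
    refine Finset.sum_bij' (fun i _ => i + (n:ℤ)) (fun i _ => i - (n:ℤ)) ?_ ?_ ?_ ?_ ?_
    · intro i hi; simp only [mem_Ioc] at hi ⊢; omega
    · intro i hi; simp only [mem_Ioc] at hi ⊢; omega
    · intro i _; ring
    · intro i _; ring
    · intro i _
      norm_num
  rw [hre, ← Finset.sum_add_distrib]
  -- step 5: pointwise identity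
  have hIccIoc : Finset.Icc (1:ℤ) (n:ℤ) = Finset.Ioc (0:ℤ) (n:ℤ) := by
    ext i; simp only [mem_Icc, mem_Ioc]; omega
  refine Finset.sum_congr hIccIoc.symm ?_
  intro i hi
  simp only [mem_Icc] at hi
  have hper : π (i - (n:ℤ)) = π i - n := by
    have h0 := hπ.periodic (i - (n:ℤ))
    rw [sub_add_cancel] at h0
    omega
  simp_rw [hper]
  have hle := hπ.le_self i
  have hla := hπ.le_add i
  have e1 : (Finset.Icc (1:ℤ) (n:ℤ)).filter (fun t => i - n ≤ t ∧ t < π i - n)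
      = Finset.Icc (1:ℤ) (min (n:ℤ) (π i - n - 1)) := by
    ext t; simp only [mem_filter, mem_Icc]; omega
  have e2 : (Finset.Icc (1:ℤ) (n:ℤ)).filter (fun t => i ≤ t ∧ t < π i)
      = Finset.Icc i (min (n:ℤ) (π i - 1)) := by
    ext t; simp only [mem_filter, mem_Icc]; omega
  rw [e1, e2, Int.card_Icc, Int.card_Icc]
  omega
lemma count_eq_balls {h : ℕ} (hπ : IsJuggling n π) (hballs : HasBalls n π h) (a : ℤ) :
    (ballCount n π a : ℤ) = h := by
  have hnp := hπ.npos
  have hsum := sum_count hπ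
  rw [hballs] at hsum
  have hconst : ∀ t ∈ Finset.Icc (1:ℤ) (n:ℤ), ((ballCount n π t : ℤ)) = ((ballCount n π a : ℤ)) := by
    intro t _
    rw [count_const hπ t, count_const hπ a]
  rw [Finset.sum_congr rfl hconst, Finset.sum_const, Int.card_Icc] at hsum
  have hcard : ((n:ℤ) + 1 - 1).toNat = n := by omega
  rw [hcard, nsmul_eq_mul] at hsum
  have hn0 : ((n:ℤ)) ≠ 0 := by omega
  exact mul_left_cancel₀ hn0 (by linarith [hsum])

/-- **Conservation of balls.** If `π` is a juggling function of period `n` with `h`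
balls, then for every `a`,
`(π a − a) + |S_{π†}(π a, a + n)| − |S_π(a, π a)| = h`. -/
theorem balls_formula (n h : ℕ) (π : ℤ ≃ ℤ) (hπ : IsJuggling n π)
    (hballs : HasBalls n π h) :
    ∀ a : ℤ,
      (π a - a) + (Set.ncard {i : ℤ | π a < i ∧ dualJug n π i < a + n} : ℤ)
        - (Set.ncard {i : ℤ | a < i ∧ π i < π a} : ℤ) = (h : ℤ) := by
  intro a
  have hnp := hπ.npos
  have hlsa := hπ.le_self a
  -- convert the two set counts to finset cards
  set D1 : Finset ℤ := (Finset.Icc (π a + 1) (a + (n:ℤ) - 1)).filter (fun i => π.symm i < a) with hD1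
  set D2 : Finset ℤ := (Finset.Icc (a + 1) (π a - 1)).filter (fun i => π i < π a) with hD2
  have hs1 : {i : ℤ | π a < i ∧ dualJug n π i < a + n} = ↑D1 := by
    ext i
    simp only [hD1, Set.mem_setOf_eq, Finset.coe_filter, mem_Icc, Set.mem_setOf_eq,
      dualJug, Equiv.trans_apply, Equiv.coe_addRight]
    have h5 := le_symm_add hπ i
    omega
  have hs2 : {i : ℤ | a < i ∧ π i < π a} = ↑D2 := by
    ext i
    simp only [hD2, Set.mem_setOf_eq, Finset.coe_filter, mem_Icc, Set.mem_setOf_eq]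
    have h5 := hπ.le_self i
    omega
  rw [hs1, hs2, Set.ncard_coe_finset, Set.ncard_coe_finset]
  -- the ball count at time a
  set S : Finset ℤ := (Finset.Icc (a - (n:ℤ) + 1) a).filter (fun i => a < π i) with hS
  have hBa : ballCount n π a = S.card := rfl
  have hsplit1 : (S.filter (fun i => π a < π i)).card
      + (S.filter (fun i => ¬ π a < π i)).card = S.card :=
    Finset.card_filter_add_card_filter_not _
  -- P1 ↔ D1 via π
  have h1card : (S.filter (fun i => π a < π i)).card = D1.card := by
    refine Finset.card_bij' (fun i _ => π i) (fun v _ => π.symm v) ?_ ?_ ?_ ?_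
    · intro i hi
      simp only [hS, mem_filter, mem_Icc] at hi
      obtain ⟨⟨⟨hb1, hb2⟩, hb3⟩, hb4⟩ := hi
      have ha := hπ.le_add i
      have hne : i ≠ a := by rintro rfl; omega
      simp only [hD1, mem_filter, mem_Icc, Equiv.symm_apply_apply]
      omega
    · intro v hv
      simp only [hD1, mem_filter, mem_Icc] at hv
      obtain ⟨⟨hb1, hb2⟩, hb3⟩ := hv
      have h5 := le_symm_add hπ v
      simp only [hS, mem_filter, mem_Icc, Equiv.apply_symm_apply]
      omega
    · intro i _; exact π.symm_apply_apply i
    · intro v _; exact π.apply_symm_apply v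
  -- P2 ↔ E via π
  have h2card : (S.filter (fun i => ¬ π a < π i)).card
      = ((Finset.Icc (a + 1) (π a)).filter (fun v => π.symm v ≤ a)).card := by
    refine Finset.card_bij' (fun i _ => π i) (fun v _ => π.symm v) ?_ ?_ ?_ ?_
    · intro i hi
      simp only [hS, mem_filter, mem_Icc] at hi
      obtain ⟨⟨⟨hb1, hb2⟩, hb3⟩, hb4⟩ := hi
      simp only [mem_filter, mem_Icc, Equiv.symm_apply_apply]
      omega
    · intro v hv
      simp only [mem_filter, mem_Icc] at hv
      obtain ⟨⟨hb1, hb2⟩, hb3⟩ := hv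
      have h5 := le_symm_add hπ v
      simp only [hS, mem_filter, mem_Icc, Equiv.apply_symm_apply]
      omega
    · intro i _; exact π.symm_apply_apply i
    · intro v _; exact π.apply_symm_apply v
  have hsplitE : ((Finset.Icc (a + 1) (π a)).filter (fun v => π.symm v ≤ a)).card
      + ((Finset.Icc (a + 1) (π a)).filter (fun v => ¬ π.symm v ≤ a)).card
      = (Finset.Icc (a + 1) (π a)).card :=
    Finset.card_filter_add_card_filter_not _
  -- E' ↔ D2 via π.symm
  have h3card : ((Finset.Icc (a + 1) (π a)).filter (fun v => ¬ π.symm v ≤ a)).card = D2.card := by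
    refine Finset.card_bij' (fun v _ => π.symm v) (fun i _ => π i) ?_ ?_ ?_ ?_
    · intro v hv
      simp only [mem_filter, mem_Icc] at hv
      obtain ⟨⟨hb1, hb2⟩, hb3⟩ := hv
      have h5 := symm_le hπ v
      have hne : v ≠ π a := by
        rintro rfl
        exact hb3 (le_of_eq (π.symm_apply_apply a))
      simp only [hD2, mem_filter, mem_Icc, Equiv.apply_symm_apply]
      omega
    · intro i hi
      simp only [hD2, mem_filter, mem_Icc] at hi
      obtain ⟨⟨hb1, hb2⟩, hb3⟩ := hi
      have h5 := hπ.le_self i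
      simp only [mem_filter, mem_Icc, Equiv.symm_apply_apply]
      omega
    · intro v _; exact π.apply_symm_apply v
    · intro i _; exact π.symm_apply_apply i
  have hIcc : (((Finset.Icc (a + 1) (π a)).card : ℤ)) = π a - a := by
    rw [Int.card_Icc]; omega
  have hfinal := count_eq_balls hπ hballs a
  rw [hBa] at hfinal
  omega
end
end
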